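/- arXiv:1205.2496 — 2 statements merged into one kernel-verified Lean document; each statement's English description precedes it below -/
import Mathlib

section
/- Let G be a finite group, A a Hall π-subgroup of G, and T a subgroup with G = AT. If A permutes with every subgroup of T, then G is an E_{π'}-group, i.e., G has a Hall π'-subgroup. -/
open scoped Pointwise

/-- `n` is a `π`-number: every prime divisor of `n` lies in `π`. -/
def IsPiNumber (π : Set ℕ) (n : ℕ) : Prop := ∀ p : ℕ, p.Prime → p ∣ n → p ∈ π

/-- `n` is a `π'`-number: no prime divisor of `n` lies in `π`. -/
def IsPiPrimeNumber (π : Set ℕ) (n : ℕ) : Prop := ∀ p : ℕ, p.Prime → p ∣ n → p ∉ π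

/-- The complement `π'` of `π` inside the set of all primes. -/
def piPrime (π : Set ℕ) : Set ℕ := {p : ℕ | p.Prime ∧ p ∉ π}

/-- `H` is a Hall `π`-subgroup: its order is a `π`-number and its index is a `π'`-number. -/
def IsHallPiSubgroup (π : Set ℕ) {G : Type*} [Group G] (H : Subgroup G) : Prop :=
  IsPiNumber π (Nat.card H) ∧ IsPiPrimeNumber π H.index

/-- `G` is an `E_π`-group: it has a Hall `π`-subgroup. -/
def IsEPiGroup (π : Set ℕ) (G : Type*) [Group G] : Prop :=
  ∃ H : Subgroup G, IsHallPiSubgroup π H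

/-- `G` is a `C_π`-group: an `E_π`-group in which any two Hall `π`-subgroups are conjugate. -/
def IsCPiGroup (π : Set ℕ) (G : Type*) [Group G] : Prop :=
  IsEPiGroup π G ∧ ∀ H K : Subgroup G, IsHallPiSubgroup π H → IsHallPiSubgroup π K →
    ∃ x : G, K = H.map (MulAut.conj x).toMonoidHom

/-- `G` is a `D_π`-group: an `E_π`-group in which every `π`-subgroup lies in a
Hall `π`-subgroup.  (Together with `C_π`-ness this is the classical definition; for
`D_π` as in the paper, every Hall `π`-subgroup is conjugate to any other since both
contain conjugates of each other.) -/
def IsDPiGroup (π : Set ℕ) (G : Type*) [Group G] : Prop :=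
  IsEPiGroup π G ∧ ∀ U : Subgroup G, IsPiNumber π (Nat.card U) →
    ∃ H : Subgroup G, IsHallPiSubgroup π H ∧ U ≤ H

/-- Subgroups `A` and `B` permute: `AB = BA` as subsets. -/
def Permute {G : Type*} [Group G] (A B : Subgroup G) : Prop :=
  (A : Set G) * (B : Set G) = (B : Set G) * (A : Set G)

/-- `A` is `X`-permutable with `B`: `A B^x = B^x A` for some `x ∈ X`. -/
def XPermutable {G : Type*} [Group G] (X A B : Subgroup G) : Prop :=
  ∃ x ∈ X, Permute A (B.map (MulAut.conj x).toMonoidHom)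

/-- `P` is a Sylow subgroup of the subgroup `T` (both viewed inside the ambient group). -/
def IsSylowOf {G : Type*} [Group G] (P T : Subgroup G) : Prop :=
  ∃ p : ℕ, p.Prime ∧ ∃ Q : Sylow p ↥T, P = (Q : Subgroup ↥T).map T.subtype

/-- A group is `π`-separable if it has a chief series each of whose factors has order
a `π`-number or a `π'`-number. -/
def IsPiSeparable (π : Set ℕ) (G : Type*) [Group G] : Prop :=
  ∃ (t : ℕ) (H : ℕ → Subgroup G), H 0 = ⊥ ∧ H t = ⊤ ∧
    (∀ i, i ≤ t → (H i).Normal) ∧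
    (∀ i, i < t → H i < H (i + 1)) ∧
    (∀ i, i < t → ∀ N : Subgroup G, N.Normal → H i < N → N ≤ H (i + 1) → N = H (i + 1)) ∧
    (∀ i, i < t → IsPiNumber π ((H i).relIndex (H (i + 1))) ∨
      IsPiPrimeNumber π ((H i).relIndex (H (i + 1))))


/-!
Put `C = A ⊓ T`. Since `AT = G`, `|T : C| = |G : A|`, so `C` is a Hall `π`-subgroup of `T`, and by
Dedekind's law `C` permutes with every subgroup of `T`, as `A` does. If `C` permutes with a
`π`-subgroup `D ≤ T`, then `|CD : C| = |D : C ⊓ D|` is a `π`-number dividing the `π'`-number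
`|T : C|`, so `D ≤ C`. Taking for `D` the `T`-conjugates of `C` shows `C ⊴ T`, and Schur–Zassenhaus
gives a complement `V` of `C` in `T`. Its order `|T : C| = |G : A|` is a `π'`-number and its index
`|G : T| * |C|` is a `π`-number, because `|G : T| = |A : A ⊓ T|`.
-/

theorem IsPiNumber.of_dvd {π : Set ℕ} {m n : ℕ} (h : IsPiNumber π n) (hmn : m ∣ n) :
    IsPiNumber π m :=
  fun p hp hpm => h p hp (hpm.trans hmn)

theorem IsPiPrimeNumber.of_dvd {π : Set ℕ} {m n : ℕ} (h : IsPiPrimeNumber π n) (hmn : m ∣ n) :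
    IsPiPrimeNumber π m :=
  fun p hp hpm => h p hp (hpm.trans hmn)

theorem IsPiPrimeNumber.mul {π : Set ℕ} {m n : ℕ} (hm : IsPiPrimeNumber π m)
    (hn : IsPiPrimeNumber π n) : IsPiPrimeNumber π (m * n) :=
  fun p hp hpmn => (hp.dvd_mul.mp hpmn).elim (hm p hp) (hn p hp)

theorem IsPiNumber.coprime {π : Set ℕ} {m n : ℕ} (hm : IsPiNumber π m)
    (hn : IsPiPrimeNumber π n) : m.Coprime n :=
  Nat.coprime_of_dvd fun p hp hpm hpn => hn p hp hpn (hm p hp hpm)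

theorem IsPiNumber.eq_one {π : Set ℕ} {n : ℕ} (h : IsPiNumber π n) (h' : IsPiPrimeNumber π n) :
    n = 1 :=
  (Nat.coprime_self n).mp (h.coprime h')

theorem isPiNumber_piPrime {π : Set ℕ} {n : ℕ} :
    IsPiNumber (piPrime π) n ↔ IsPiPrimeNumber π n :=
  ⟨fun h p hp hpn => (h p hp hpn).2, fun h p hp hpn => ⟨hp, h p hp hpn⟩⟩

theorem isPiPrimeNumber_piPrime {π : Set ℕ} {n : ℕ} :
    IsPiPrimeNumber (piPrime π) n ↔ IsPiNumber π n :=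
  ⟨fun h p hp hpn => by_contra fun hpπ => h p hp hpn ⟨hp, hpπ⟩,
    fun h p hp hpn hpπ => hpπ.2 (h p hp hpn)⟩

section

variable {G : Type*} [Group G]

theorem Subgroup.relIndex_eq_relIndex_of_subset_mul {H K L : Subgroup G} (hKL : K ≤ L)
    (hL : (L : Set G) ⊆ (H : Set G) * K) : H.relIndex K = H.relIndex L := by
  refine Nat.card_congr (Equiv.ofBijective (quotientSubgroupOfEmbeddingOfLE H hKL)
    ⟨(quotientSubgroupOfEmbeddingOfLE H hKL).injective, ?_⟩)
  rintro ⟨l⟩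
  obtain ⟨h, hh, k, hk, hhk⟩ := hL (L.inv_mem l.2)
  refine ⟨QuotientGroup.mk ⟨k⁻¹, K.inv_mem hk⟩, QuotientGroup.eq.mpr ?_⟩
  have hkl : k * l = h⁻¹ := by
    rw [← inv_inv (l : G), ← show h * k = (l : G)⁻¹ from hhk]
    group
  simpa [mem_subgroupOf, hkl] using H.inv_mem hh

namespace Permute

def subgroup {A B : Subgroup G} (h : Permute A B) : Subgroup G where
  carrier := (A : Set G) * B
  one_mem' := ⟨1, A.one_mem, 1, B.one_mem, one_mul 1⟩
  mul_mem' {x y} hx hy := by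
    have hAB : ((A : Set G) * B) * (A * B) = A * B :=
      calc ((A : Set G) * B) * (A * B) = A * (B * A) * B := by simp only [mul_assoc]
        _ = (A * A) * (B * B) := by rw [← h]; simp only [mul_assoc]
        _ = A * B :=
          congrArg₂ (· * ·) A.toSubmonoid.coe_mul_self_eq B.toSubmonoid.coe_mul_self_eq
    exact hAB ▸ Set.mul_mem_mul hx hy
  inv_mem' {x} hx := by
    have hAB : ((A : Set G) * B)⁻¹ = A * B := by
      rw [mul_inv_rev, inv_coe_set, inv_coe_set, h]
    exact hAB ▸ Set.inv_mem_inv.mpr hx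

theorem left_le {A B : Subgroup G} (h : Permute A B) : A ≤ h.subgroup :=
  fun a ha => ⟨a, ha, 1, B.one_mem, mul_one a⟩

theorem right_le {A B : Subgroup G} (h : Permute A B) : B ≤ h.subgroup :=
  fun b hb => ⟨1, A.one_mem, b, hb, one_mul b⟩

theorem subgroup_le {A B T : Subgroup G} (h : Permute A B) (hA : A ≤ T) (hB : B ≤ T) :
    h.subgroup ≤ T := by
  rintro _ ⟨a, ha, b, hb, rfl⟩
  exact T.mul_mem (hA ha) (hB hb)

theorem inf_left {A B : Subgroup G} (h : Permute A B) {T : Subgroup G} (hB : B ≤ T) :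
    Permute (A ⊓ T) B := by
  unfold Permute
  rw [inf_comm, Subgroup.inf_mul_assoc T A B hB, inf_comm, Subgroup.mul_inf_assoc B A T hB, h,
    Set.inter_comm]

theorem le_of_isPiPrimeNumber_relIndex {π : Set ℕ} {C D T : Subgroup G} (h : Permute C D)
    (hCT : C ≤ T) (hDT : D ≤ T) (hC : IsPiPrimeNumber π (C.relIndex T))
    (hD : IsPiNumber π (Nat.card D)) : D ≤ C := by
  have hS : C.relIndex h.subgroup = C.relIndex D :=
    (Subgroup.relIndex_eq_relIndex_of_subset_mul h.right_le subset_rfl).symm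
  have hπ : IsPiNumber π (C.relIndex h.subgroup) := hS ▸ hD.of_dvd (C.relIndex_dvd_card D)
  have hπ' : IsPiPrimeNumber π (C.relIndex h.subgroup) :=
    hC.of_dvd (Dvd.intro _ (C.relIndex_mul_relIndex _ T h.left_le (h.subgroup_le hCT hDT)))
  exact h.right_le.trans (Subgroup.relIndex_eq_one.mp (hπ.eq_one hπ'))

end Permute

theorem Subgroup.normal_subgroupOf_of_forall_permute {π : Set ℕ} {C T : Subgroup G}
    (hCT : C ≤ T) (hC : IsPiNumber π (Nat.card C)) (hCT' : IsPiPrimeNumber π (C.relIndex T))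
    (hperm : ∀ B ≤ T, Permute C B) : (C.subgroupOf T).Normal := by
  refine ⟨fun c hc t => ?_⟩
  rw [mem_subgroupOf] at hc ⊢
  set D := C.map (MulAut.conj (t : G)).toMonoidHom
  have hDT : D ≤ T := by
    rintro _ ⟨x, hx, rfl⟩
    simpa using T.mul_mem (T.mul_mem t.2 (hCT hx)) (T.inv_mem t.2)
  have hD : Nat.card D = Nat.card C := card_map_of_injective (MulAut.conj (t : G)).injective
  have hDC : D ≤ C := (hperm D hDT).le_of_isPiPrimeNumber_relIndex hCT hDT hCT' (hD ▸ hC)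
  simpa using hDC ⟨c, hc, rfl⟩

theorem IsHallPiSubgroup.isEPiGroup_piPrime_of_normal {π : Set ℕ} {N : Subgroup G} [N.Normal]
    (hN : IsHallPiSubgroup π N) : IsEPiGroup (piPrime π) G := by
  obtain ⟨K, hK⟩ := Subgroup.exists_right_complement'_of_coprime (hN.1.coprime hN.2)
  exact ⟨K, isPiNumber_piPrime.mpr (hK.card_right ▸ hN.2),
    isPiPrimeNumber_piPrime.mpr (hK.index_eq_card ▸ hN.1)⟩

theorem IsEPiGroup.of_isPiPrimeNumber_index {π : Set ℕ} {T : Subgroup G} (hT : IsEPiGroup π T)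
    (hTG : IsPiPrimeNumber π T.index) : IsEPiGroup π G := by
  obtain ⟨K, hK⟩ := hT
  exact ⟨K.map T.subtype, (Subgroup.card_map_of_injective T.subtype_injective).symm ▸ hK.1,
    (Subgroup.index_map_subtype K).symm ▸ hK.2.mul hTG⟩

end

theorem stmt_7_general {G : Type*} [Group G] (π : Set ℕ)
    (A : Subgroup G) (hA : IsHallPiSubgroup π A)
    (T : Subgroup G) (hAT : (A : Set G) * (T : Set G) = Set.univ)
    (hperm : ∀ B : Subgroup G, B ≤ T → Permute A B) :
    IsEPiGroup (piPrime π) G := by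
  have hTA : (T : Set G) * (A : Set G) = Set.univ := (hperm T le_rfl).symm.trans hAT
  have hCpi : IsPiNumber π (Nat.card (A ⊓ T : Subgroup G)) :=
    hA.1.of_dvd (Subgroup.card_dvd_of_le inf_le_left)
  have hCidx : IsPiPrimeNumber π ((A ⊓ T).relIndex T) := by
    rw [Subgroup.inf_relIndex_right, Subgroup.relIndex_eq_relIndex_of_subset_mul le_top
      (by rw [Subgroup.coe_top, hAT]), Subgroup.relIndex_top_right]
    exact hA.2
  have hTidx : IsPiNumber π T.index := by
    rw [← Subgroup.relIndex_top_right, ← Subgroup.relIndex_eq_relIndex_of_subset_mul (K := A)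
      le_top (by rw [Subgroup.coe_top, hTA])]
    exact hA.1.of_dvd (T.relIndex_dvd_card A)
  have hC : IsHallPiSubgroup π ((A ⊓ T).subgroupOf T) := by
    refine ⟨?_, hCidx⟩
    rwa [← Subgroup.card_map_of_injective T.subtype_injective, Subgroup.subgroupOf_map_subtype,
      inf_of_le_left inf_le_right]
  have : ((A ⊓ T).subgroupOf T).Normal := Subgroup.normal_subgroupOf_of_forall_permute inf_le_right
    hCpi hCidx fun B hB => (hperm B hB).inf_left hB
  exact hC.isEPiGroup_piPrime_of_normal.of_isPiPrimeNumber_index (isPiPrimeNumber_piPrime.mpr hTidx)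

theorem stmt_7 {G : Type*} [Group G] [Finite G] (π : Set ℕ)
    (hπprime : ∀ p ∈ π, Nat.Prime p) (hπne : π.Nonempty)
    (A : Subgroup G) (hA : IsHallPiSubgroup π A)
    (T : Subgroup G) (hAT : (A : Set G) * (T : Set G) = Set.univ)
    (hperm : ∀ B : Subgroup G, B ≤ T → Permute A B) :
    IsEPiGroup (piPrime π) G :=
  stmt_7_general π A hA T hAT hperm
end

section
/- Let A and B be subgroups of a finite group G such that G ≠ AB and AB^x = B^x A for all x ∈ G. Then G has a proper normal subgroup N such that either A ≤ N or B ≤ N. -/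
open scoped Pointwise

/-!
Among the subgroups `T ≥ B` such that `A` permutes with every conjugate of `T` and `AT ≠ G`,
choose a maximal one. Since `AD = G` forces `AD^x = G`, for every conjugate `T₀` of `T` the
subgroup `AT₀` is proper; for `a ∈ A` it contains `T₀ ⊔ T₀^a`, whose conjugates are joins of
conjugates of `T` and so still permute with `A`. Maximality gives `T₀^a = T₀`. Hence `A`
normalises every conjugate of `T`, i.e. lies in the normal core of `N_G(T)`, and this core is
proper unless `T` itself is normal.
-/

open Subgroup

section

variable {G : Type*} [Group G]

namespace Permute

variable {A H K : Subgroup G}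

theorem of_mul_subset (h : (H : Set G) * A ⊆ A * H) : Permute A H := by
  refine h.antisymm' ?_
  simpa only [mul_inv_rev, inv_coe_set] using Set.inv_subset_inv.mpr h

theorem coe_sup (h : Permute A H) : ((A ⊔ H : Subgroup G) : Set G) = A * H := by
  have hmul : ((A : Set G) * H) * (A * H) = A * H := by
    rw [mul_assoc, ← mul_assoc (H : Set G), ← h, mul_assoc, ← mul_assoc, coe_mul_coe, coe_mul_coe]
  have hinv : ((A : Set G) * H)⁻¹ = A * H := by rw [mul_inv_rev, inv_coe_set, inv_coe_set, h]
  rw [sup_eq_closure_mul]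
  refine Set.Subset.antisymm (fun x hx => ?_) subset_closure
  induction hx using closure_induction with
  | mem _ hx => exact hx
  | one => exact ⟨1, one_mem _, 1, one_mem _, mul_one 1⟩
  | mul _ _ _ _ hx hy => exact hmul ▸ Set.mul_mem_mul hx hy
  | inv _ _ hx => exact hinv ▸ Set.inv_mem_inv.mpr hx

theorem sup (hH : Permute A H) (hK : Permute A K) : Permute A (H ⊔ K) := by
  have base : ∀ x ∈ (H : Set G) ∪ K, ∀ a ∈ A, x * a ∈ (A : Set G) * (H ⊔ K : Subgroup G) := by
    rintro x (hx | hx) a ha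
    · exact Set.mul_subset_mul_left (SetLike.coe_subset_coe.mpr le_sup_left)
        (hH ▸ Set.mul_mem_mul hx ha)
    · exact Set.mul_subset_mul_left (SetLike.coe_subset_coe.mpr le_sup_right)
        (hK ▸ Set.mul_mem_mul hx ha)
  refine of_mul_subset ?_
  rintro _ ⟨x, hx, a, ha, rfl⟩
  rw [SetLike.mem_coe, ← closure_eq H, ← closure_eq K, ← Subgroup.closure_union] at hx
  induction hx using closure_induction'' generalizing a with
  | mem x hx => exact base x hx a ha
  | inv_mem x hx =>
    refine base x⁻¹ ?_ a ha
    rcases hx with hx | hx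
    exacts [Or.inl (inv_mem hx), Or.inr (inv_mem hx)]
  | one => exact ⟨a, ha, 1, one_mem _, by simp⟩
  | mul x y _ _ hx hy =>
    obtain ⟨a', ha', z, hz, hyz⟩ := hy a ha
    obtain ⟨a'', ha'', w, hw, hxw⟩ := hx a' ha'
    refine ⟨a'', ha'', w * z, mul_mem hw hz, ?_⟩
    simp only at hyz hxw ⊢
    rw [← mul_assoc, hxw, mul_assoc, hyz, ← mul_assoc]

end Permute

namespace Subgroup

variable {A D T : Subgroup G}

theorem mul_conj_smul_eq_univ (h : (A : Set G) * (D : Set G) = Set.univ) (x : G) :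
    (A : Set G) * ((MulAut.conj x • D : Subgroup G) : Set G) = Set.univ := by
  obtain ⟨a, ha, d, hd, rfl⟩ : x ∈ (A : Set G) * D := h ▸ Set.mem_univ x
  refine Set.eq_univ_of_forall fun g => ?_
  obtain ⟨a', ha', d', hd', hg⟩ : g * (a * d) ∈ (A : Set G) * D := h ▸ Set.mem_univ _
  refine ⟨a' * a⁻¹, mul_mem ha' (inv_mem ha), MulAut.conj (a * d) • (d⁻¹ * d'),
    smul_mem_pointwise_smul _ _ _ (mul_mem (inv_mem hd) hd'), ?_⟩
  obtain rfl : a' = g * (a * d) * d'⁻¹ := eq_mul_inv_of_mul_eq hg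
  simp only [MulAut.smul_def, MulAut.conj_apply]
  group

theorem mul_conj_smul_eq_univ_iff (x : G) :
    (A : Set G) * ((MulAut.conj x • D : Subgroup G) : Set G) = Set.univ ↔
      (A : Set G) * (D : Set G) = Set.univ := by
  refine ⟨fun h => ?_, fun h => mul_conj_smul_eq_univ h x⟩
  simpa only [map_inv, inv_smul_smul] using mul_conj_smul_eq_univ h x⁻¹

theorem conj_smul_le_of_maximal
    (hperm : ∀ x : G, Permute A (MulAut.conj x • T))
    (hne : (A : Set G) * (T : Set G) ≠ Set.univ)
    (hmax : ∀ T' : Subgroup G, T < T' → (∀ x : G, Permute A (MulAut.conj x • T')) →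
      (A : Set G) * (T' : Set G) = Set.univ)
    (x : G) {a : G} (ha : a ∈ A) :
    MulAut.conj a • MulAut.conj x • T ≤ MulAut.conj x • T := by
  set T₀ := MulAut.conj x • T
  set T' := MulAut.conj x⁻¹ • (T₀ ⊔ MulAut.conj a • T₀) with hT'_def
  have hT' : MulAut.conj x • T' = T₀ ⊔ MulAut.conj a • T₀ := by
    rw [hT'_def, map_inv, smul_inv_smul]
  have hle : T ≤ T' := by
    rw [← pointwise_smul_le_pointwise_smul_iff (a := MulAut.conj x), hT']
    exact le_sup_left
  have hperm' : ∀ y : G, Permute A (MulAut.conj y • T') := by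
    intro y
    simp only [T', T₀, smul_sup, smul_smul, ← map_mul]
    exact (hperm _).sup (hperm _)
  have hK : ((A ⊔ T₀ : Subgroup G) : Set G) ≠ Set.univ := by
    rw [(hperm x).coe_sup]
    exact (mul_conj_smul_eq_univ_iff x).not.mpr hne
  have hne' : (A : Set G) * (T' : Set G) ≠ Set.univ := by
    rw [Ne, ← mul_conj_smul_eq_univ_iff x, hT']
    refine fun h => hK (Set.eq_univ_of_univ_subset (h ▸ ?_))
    refine (Set.mul_subset_mul (SetLike.coe_subset_coe.mpr le_sup_left)
      (SetLike.coe_subset_coe.mpr ?_)).trans (coe_mul_coe _).le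
    exact sup_le le_sup_right (conj_smul_le_of_le le_sup_right ⟨a, mem_sup_left ha⟩)
  have hTT' : T' = T := by
    by_contra h
    exact hne' (hmax T' (hle.lt_of_ne (Ne.symm h)) hperm')
  calc MulAut.conj a • T₀ ≤ T₀ ⊔ MulAut.conj a • T₀ := le_sup_right
    _ = T₀ := by rw [← hT', hTT']

theorem le_normalCore_normalizer_of_conj_smul_le
    (h : ∀ x : G, ∀ a ∈ A, MulAut.conj a • MulAut.conj x • T ≤ MulAut.conj x • T) :
    A ≤ (normalizer (T : Set G)).normalCore := by
  intro a ha b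
  have heq : MulAut.conj a • MulAut.conj b⁻¹ • T = MulAut.conj b⁻¹ • T := by
    refine (h _ a ha).antisymm ?_
    rw [subset_pointwise_smul_iff, ← map_inv]
    exact h _ a⁻¹ (inv_mem ha)
  rw [mem_normalizer_iff_map_conj_eq]
  change MulAut.conj (b * a * b⁻¹) • T = T
  rw [map_mul, map_mul, mul_smul, mul_smul, heq, smul_smul, ← map_mul, mul_inv_cancel, map_one,
    one_smul]

end Subgroup

end

theorem stmt_17 {G : Type*} [Group G] [Finite G] (A B : Subgroup G)
    (hne : (A : Set G) * (B : Set G) ≠ Set.univ)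
    (hperm : ∀ x : G, (A : Set G) * ((B.map (MulAut.conj x).toMonoidHom : Subgroup G) : Set G) =
      ((B.map (MulAut.conj x).toMonoidHom : Subgroup G) : Set G) * (A : Set G)) :
    ∃ N : Subgroup G, N.Normal ∧ N ≠ ⊤ ∧ (A ≤ N ∨ B ≤ N) := by
  obtain ⟨T, hBT, ⟨hTperm, hTne⟩, hTmax⟩ := Finite.exists_le_maximal
    (p := fun T : Subgroup G => (∀ x : G, Permute A (MulAut.conj x • T)) ∧
      (A : Set G) * (T : Set G) ≠ Set.univ) ⟨hperm, hne⟩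
  have hAT : A ≤ (normalizer (T : Set G)).normalCore := by
    refine le_normalCore_normalizer_of_conj_smul_le fun x a ha => ?_
    refine conj_smul_le_of_maximal hTperm hTne (fun T' hlt hperm' => ?_) x ha
    by_contra h
    exact hlt.not_ge (hTmax ⟨hperm', h⟩ hlt.le)
  by_cases hT : T.Normal
  · refine ⟨T, hT, fun h => hTne ?_, Or.inr hBT⟩
    rw [h, coe_top, Set.mul_univ_of_one_mem A.one_mem]
  · refine ⟨_, inferInstance, fun h => hT ?_, Or.inl hAT⟩
    exact normalizer_eq_top_iff.mp (top_le_iff.mp (h ▸ normalCore_le _))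
end
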